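/- arXiv:1104.5007 — 2 statements merged into one kernel-verified Lean document; each statement's English description precedes it below -/
import Mathlib

section
/- For every integer n ≥ 2, every n×n (0,1)-matrix with at least 4n−3 1-entries is 3-full; equivalently, p₂(n) ≤ 4n−4. -/
/-! ## Inverse Ackermann hierarchy -/

/-- Bounded-fuel iteration counter: number of applications of `f` needed to bring `m`
down to a value `≤ 1` (assuming `f` strictly decreases on values `≥ 2`). -/
def iterCount (f : ℕ → ℕ) : ℕ → ℕ → ℕ
  | 0, _ => 0
  | fuel + 1, m => if m ≤ 1 then 0 else 1 + iterCount f fuel (f m)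

/-- The inverse Ackermann hierarchy: `alphaHier 1 m = ⌈m/2⌉`, `alphaHier d 1 = 0` for `d ≥ 2`,
and `alphaHier d m = 1 + alphaHier d (alphaHier (d-1) m)` for `m, d ≥ 2`. -/
def alphaHier : ℕ → ℕ → ℕ
  | 0, m => m
  | 1, m => (m + 1) / 2
  | d + 2, m => iterCount (alphaHier (d + 1)) m m

/-- The inverse Ackermann function `α(m) = min {k ≥ 1 : α_k(m) ≤ 3}`. -/
noncomputable def invAck (m : ℕ) : ℕ := sInf {k : ℕ | 1 ≤ k ∧ alphaHier k m ≤ 3}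

/-! ## Permutations, restrictions, VC-dimension -/

/-- The restriction of the `n`-permutation `π` to the (increasing) `k`-tuple of positions `a`
is the `k`-permutation `σ`. -/
def PermRestrictionIs {n k : ℕ} (π : Equiv.Perm (Fin n)) (a : Fin k → Fin n)
    (σ : Equiv.Perm (Fin k)) : Prop :=
  ∀ i j : Fin k, σ i < σ j ↔ π (a i) < π (a j)

/-- The `k`-tuple of positions `a` is shattered by the family `P` of `n`-permutations. -/
def Shatters {n k : ℕ} (P : Finset (Equiv.Perm (Fin n))) (a : Fin k → Fin n) : Prop :=
  StrictMono a ∧ ∀ σ : Equiv.Perm (Fin k), ∃ π ∈ P, PermRestrictionIs π a σ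

/-- The family `P` of `n`-permutations has VC-dimension at most `k`:
no `(k+1)`-tuple of positions is shattered by `P`. -/
def VCDimLE (n k : ℕ) (P : Finset (Equiv.Perm (Fin n))) : Prop :=
  ∀ a : Fin (k + 1) → Fin n, ¬ Shatters P a

/-- The number of `1`-entries of the union of the permutation matrices of a family `P`
of `n`-permutations. -/
noncomputable def permOnes {n : ℕ} (P : Finset (Equiv.Perm (Fin n))) : ℕ :=
  Nat.card {p : Fin n × Fin n // ∃ π ∈ P, π p.2 = p.1}

/-- `v(P) = |M_P| / n`, the average number of `1`-entries per column of the union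
of the permutation matrices of the family `P`. -/
noncomputable def vPerm {n : ℕ} (P : Finset (Equiv.Perm (Fin n))) : ℝ :=
  (permOnes P : ℝ) / (n : ℝ)

/-! ## (0,1)-matrices -/

/-- The number of `1`-entries of a `(0,1)`-matrix (represented as a `Bool` matrix). -/
noncomputable def matOnes {m n : ℕ} (M : Fin m → Fin n → Bool) : ℕ :=
  Nat.card {p : Fin m × Fin n // M p.1 p.2 = true}

/-- The number of `1`-entries in column `j` of a `(0,1)`-matrix. -/
noncomputable def colOnes {m n : ℕ} (M : Fin m → Fin n → Bool) (j : Fin n) : ℕ :=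
  Nat.card {i : Fin m // M i j = true}

/-- The matrix `B` contains the matrix `S`. -/
def MatContains {m n p q : ℕ} (B : Fin m → Fin n → Bool) (S : Fin p → Fin q → Bool) : Prop :=
  ∃ (r : Fin p → Fin m) (c : Fin q → Fin n), StrictMono r ∧ StrictMono c ∧
    ∀ a b, S a b = true → B (r a) (c b) = true

/-- The `s × 2` matrix `DS_s`, with a `1`-entry in (1-indexed) row `i` and column `j`
exactly when `i + j` is odd. -/
def DS (s : ℕ) : Fin s → Fin 2 → Bool :=
  fun i j => decide ((i.val + j.val) % 2 = 1)

/-- The maximum number of `1`-entries in an `n × n` matrix avoiding `S`. -/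
noncomputable def exMat {p q : ℕ} (S : Fin p → Fin q → Bool) (n : ℕ) : ℕ :=
  sSup {x : ℕ | ∃ M : Fin n → Fin n → Bool, ¬ MatContains M S ∧ matOnes M = x}

/-- An `n × n` matrix is `k`-full if some increasing `k`-tuple of columns contains
every `k`-permutation matrix. -/
def IsFull (k : ℕ) {n : ℕ} (M : Fin n → Fin n → Bool) : Prop :=
  ∃ c : Fin k → Fin n, StrictMono c ∧ ∀ σ : Equiv.Perm (Fin k),
    ∃ r : Fin k → Fin n, StrictMono r ∧ ∀ b : Fin k, M (r (σ b)) (c b) = true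

/-- `pFull k n` is the maximum number of `1`-entries in an `n × n` matrix that is
not `(k+1)`-full. -/
noncomputable def pFull (k n : ℕ) : ℕ :=
  sSup {x : ℕ | ∃ M : Fin n → Fin n → Bool, ¬ IsFull (k + 1) M ∧ matOnes M = x}

/-! ## Formations -/

/-- `M` contains a `B`-fat `(r,s)`-formation: there are an `s`-partition of the rows into
intervals (the fibers of a monotone map `g`) and `r` columns, each having at least `B`
`1`-entries in every interval. -/
def FatFormation (B r s : ℕ) {m n : ℕ} (M : Fin m → Fin n → Bool) : Prop :=
  ∃ g : Fin m → Fin s, Monotone g ∧ ∃ c : Fin r → Fin n, StrictMono c ∧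
    ∀ (j : Fin r) (i : Fin s), B ≤ Nat.card {x : Fin m // g x = i ∧ M x (c j) = true}

/-- `M` contains a doubled `(r,s)`-formation: there are an `s`-partition of the rows into
intervals and `r` columns, each having at least one `1`-entry in the first and last
interval and at least two `1`-entries in every other interval. -/
def DoubledFormation (r s : ℕ) {m n : ℕ} (M : Fin m → Fin n → Bool) : Prop :=
  ∃ g : Fin m → Fin s, Monotone g ∧ ∃ c : Fin r → Fin n, StrictMono c ∧
    ∀ (j : Fin r) (i : Fin s),
      1 ≤ Nat.card {x : Fin m // g x = i ∧ M x (c j) = true} ∧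
      (i.val ≠ 0 → i.val ≠ s - 1 → 2 ≤ Nat.card {x : Fin m // g x = i ∧ M x (c j) = true})

/-! ## The functions R, D, β -/

/-- Nivasch's hierarchy `R_s(d)` (shifted as in the paper). -/
def Rfun : ℕ → ℕ → ℕ
  | 0, _ => 0
  | 1, _ => 0
  | 2, _ => 2
  | 3, _ => 3
  | 4, d => 2 * d + 1
  | _ + 5, 0 => 0
  | _ + 5, 1 => 0
  | s + 5, 2 => 2 ^ (s + 3) + 1
  | s + 5, d + 3 =>
      2 * (Rfun (s + 4) (d + 3) - 1) + (Rfun (s + 3) (d + 3) - 1) * (Rfun (s + 5) (d + 2) - 3) + 1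
  termination_by s d => (s, d)

/-- The hierarchy `D_s(d)`. -/
def Dfun : ℕ → ℕ → ℕ
  | 0, _ => 0
  | 1, _ => 0
  | 2, _ => 2
  | _ + 3, 0 => 0
  | _ + 3, 1 => 0
  | s + 3, 2 => 2 ^ (s + 2) + 2 ^ (s + 1) - 1
  | s + 3, d + 3 =>
      2 * Dfun (s + 2) (d + 3) + (Dfun (s + 1) (d + 3) + 1) * (Rfun (s + 3) (d + 2) - 3)
        + Dfun (s + 3) (d + 2) - Rfun (s + 3) (d + 2) + 1
  termination_by s d => (s, d)

/-- `β_s(m) = D_s(α(m))`. -/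
noncomputable def betaFun (s m : ℕ) : ℕ := Dfun s (invAck m)

/-! ## Sequences: MST and formations in sequences -/

/-- The list of column indices of the `1`-entries of a row, in increasing order. -/
def rowList {n : ℕ} (row : Fin n → Bool) : List (Fin n) :=
  (List.finRange n).filter (fun j => row j)

/-- The matrix → sequence transformation: read the rows top to bottom, writing for each
`1`-entry the index of its column. -/
def MST {m n : ℕ} (M : Fin m → Fin n → Bool) : List (Fin n) :=
  ((List.finRange m).map (fun i => rowList (M i))).flatten

/-- The list `L` contains an `(r,s)`-formation as a subsequence: a concatenation of `s`
permutations of the same `r`-element set of symbols is a sublist of `L`. -/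
def IsFormationSeq {A : Type*} [DecidableEq A] (r s : ℕ) (L : List A) : Prop :=
  ∃ (T : Finset A) (F : List (List A)), T.card = r ∧ F.length = s ∧
    (∀ l ∈ F, l.Nodup ∧ l.toFinset = T) ∧ List.Sublist F.flatten L

private lemma strictMono_fin3 {α : Type*} [Preorder α] {f : Fin 3 → α}
    (h01 : f 0 < f 1) (h12 : f 1 < f 2) : StrictMono f := by
  intro a b hab
  fin_cases a <;> fin_cases b <;> simp_all
  · exact h01.trans h12

private lemma three_full (n : ℕ) (hn : 2 ≤ n) (M : Fin n → Fin n → Bool)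
    (h : 4 * n - 3 ≤ matOnes M) : IsFull 3 M := by
  classical
  have hOnes : matOnes M
      = (Finset.univ.filter fun p : Fin n × Fin n => M p.1 p.2 = true).card := by
    rw [matOnes, Nat.card_eq_fintype_card, Fintype.card_subtype]
  set Ones := Finset.univ.filter (fun p : Fin n × Fin n => M p.1 p.2 = true) with hO
  set Mid := Ones.filter
      (fun p => (∃ a, a < p.1 ∧ M a p.2 = true) ∧ (∃ b, p.1 < b ∧ M b p.2 = true)) with hMdef
  have hsub : Mid ⊆ Ones := Finset.filter_subset _ _
  have hmemMid : ∀ p : Fin n × Fin n, p ∈ Mid ↔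
      M p.1 p.2 = true ∧ (∃ a, a < p.1 ∧ M a p.2 = true) ∧ (∃ b, p.1 < b ∧ M b p.2 = true) := by
    intro p
    simp [hMdef, hO, Finset.mem_filter, and_assoc]
  -- Step 1 : non-middle ones are at most 2n
  have hstep1 : (Ones \ Mid).card ≤ 2 * n := by
    have hinj : Set.InjOn
        (fun p : Fin n × Fin n => (p.2, decide (∃ a, a < p.1 ∧ M a p.2 = true)))
        ↑(Ones \ Mid) := by
      intro p hp q hq heq
      simp only [Finset.coe_sdiff, Set.mem_diff, Finset.mem_coe] at hp hq
      obtain ⟨hpO, hpM⟩ := hp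
      obtain ⟨hqO, hqM⟩ := hq
      have hpO' : M p.1 p.2 = true := by simpa [hO] using hpO
      have hqO' : M q.1 q.2 = true := by simpa [hO] using hqO
      have hcol : p.2 = q.2 := congrArg Prod.fst heq
      have hdec : (∃ a, a < p.1 ∧ M a p.2 = true) ↔ (∃ a, a < q.1 ∧ M a q.2 = true) := by
        have := congrArg Prod.snd heq
        simpa using this
      have hpnot : ¬ ((∃ a, a < p.1 ∧ M a p.2 = true) ∧ (∃ b, p.1 < b ∧ M b p.2 = true)) := by
        intro hcon
        exact hpM (by rw [hmemMid]; exact ⟨hpO', hcon.1, hcon.2⟩)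
      have hqnot : ¬ ((∃ a, a < q.1 ∧ M a q.2 = true) ∧ (∃ b, q.1 < b ∧ M b q.2 = true)) := by
        intro hcon
        exact hqM (by rw [hmemMid]; exact ⟨hqO', hcon.1, hcon.2⟩)
      have hfst : p.1 = q.1 := by
        by_cases hab : ∃ a, a < p.1 ∧ M a p.2 = true
        · -- both have something above, so neither has anything below
          have hab' := hdec.mp hab
          have hpb : ¬ ∃ b, p.1 < b ∧ M b p.2 = true := fun hb => hpnot ⟨hab, hb⟩
          have hqb : ¬ ∃ b, q.1 < b ∧ M b q.2 = true := fun hb => hqnot ⟨hab', hb⟩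
          rcases lt_trichotomy p.1 q.1 with hlt | he | hgt
          · exact absurd ⟨q.1, hlt, hcol ▸ hqO'⟩ hpb
          · exact he
          · exact absurd ⟨p.1, hgt, hcol.symm ▸ hpO'⟩ hqb
        · have hab' : ¬ ∃ a, a < q.1 ∧ M a q.2 = true := fun ha => hab (hdec.mpr ha)
          rcases lt_trichotomy p.1 q.1 with hlt | he | hgt
          · exact absurd ⟨p.1, hlt, hcol.symm ▸ hpO'⟩ hab'
          · exact he
          · exact absurd ⟨q.1, hgt, hcol ▸ hqO'⟩ hab
      exact Prod.ext hfst hcol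
    calc (Ones \ Mid).card ≤ (Finset.univ : Finset (Fin n × Bool)).card :=
          Finset.card_le_card_of_injOn _ (fun _ _ => Finset.mem_univ _) hinj
      _ = 2 * n := by simp [Finset.card_univ, mul_comm]
  have hsum := Finset.card_sdiff_add_card_eq_card hsub
  have hMidcard : 2 * n - 3 ≤ Mid.card := by
    rw [hOnes] at h
    omega
  -- Step 2 : some row carries at least 3 middle entries
  obtain ⟨i, hi3⟩ : ∃ i : Fin n, 3 ≤ (Mid.filter fun p => p.1 = i).card := by
    by_contra hc
    push_neg at hc
    have h0 : ∀ i : Fin n, i.val = 0 ∨ i.val = n - 1 →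
        (Mid.filter fun p => p.1 = i).card = 0 := by
      intro i hi
      rw [Finset.card_eq_zero, Finset.filter_eq_empty_iff]
      rintro p hp rfl
      rw [hmemMid] at hp
      obtain ⟨-, ⟨a, ha, -⟩, ⟨b, hb, -⟩⟩ := hp
      have ha' : a.val < p.1.val := ha
      have hb' : p.1.val < b.val := hb
      have := b.isLt
      omega
    have h0n : (0 : ℕ) < n := by omega
    set z : Fin n := ⟨0, h0n⟩ with hz
    set l : Fin n := ⟨n - 1, by omega⟩ with hl
    have hzl : l ≠ z := by
      simp [hz, hl, Fin.ext_iff]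
      omega
    set s : Finset (Fin n) := (Finset.univ.erase z).erase l with hs
    have hfiber : Mid.card = ∑ j : Fin n, (Mid.filter fun p => p.1 = j).card :=
      Finset.card_eq_sum_card_fiberwise (fun x _ => Finset.mem_univ x.1)
    have hrest : ∑ j : Fin n, (Mid.filter fun p => p.1 = j).card
        = ∑ j ∈ s, (Mid.filter fun p => p.1 = j).card := by
      symm
      apply Finset.sum_subset (Finset.subset_univ _)
      intro x _ hx
      simp only [hs, Finset.mem_erase, Finset.mem_univ, and_true, not_and_or, not_not] at hx
      apply h0
      rcases hx with rfl | rfl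
      · right; rfl
      · left; rfl
    have hcards : s.card = n - 2 := by
      rw [hs, Finset.card_erase_of_mem (by simp [Finset.mem_erase, hzl]),
        Finset.card_erase_of_mem (Finset.mem_univ _), Finset.card_univ, Fintype.card_fin]
      omega
    have hb2 : Mid.card ≤ 2 * (n - 2) := by
      rw [hfiber, hrest]
      calc ∑ j ∈ s, (Mid.filter fun p => p.1 = j).card ≤ ∑ _j ∈ s, 2 :=
            Finset.sum_le_sum (fun j _ => by have := hc j; omega)
        _ = 2 * (n - 2) := by rw [Finset.sum_const, hcards, smul_eq_mul, mul_comm]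
    omega
  -- Step 3 : extract three columns
  set F := Mid.filter (fun p => p.1 = i) with hF
  have hFfst : ∀ p ∈ F, p.1 = i := by
    intro p hp
    exact (Finset.mem_filter.mp hp).2
  set S : Finset (Fin n) := F.image Prod.snd with hSdef
  have hScard : 3 ≤ S.card := by
    rw [hSdef, Finset.card_image_of_injOn]
    · exact hi3
    · intro p hp q hq hpq
      exact Prod.ext ((hFfst p hp).trans (hFfst q hq).symm) hpq
  have hSmem : ∀ j ∈ S, ((i, j) : Fin n × Fin n) ∈ Mid := by
    intro j hj
    rw [hSdef, Finset.mem_image] at hj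
    obtain ⟨p, hp, rfl⟩ := hj
    have h1 := hFfst p hp
    have h2 := (Finset.mem_filter.mp hp).1
    rwa [← h1]
  have hSne : S.Nonempty := Finset.card_pos.mp (by omega)
  set j1 := S.min' hSne with hj1
  set j3 := S.max' hSne with hj3
  have hj2ex : ((S.erase j1).erase j3).Nonempty := by
    rw [← Finset.card_pos]
    have e1 := Finset.pred_card_le_card_erase (s := S) (a := j1)
    have e2 := Finset.pred_card_le_card_erase (s := S.erase j1) (a := j3)
    omega
  obtain ⟨j2, hj2m⟩ := hj2ex
  rw [Finset.mem_erase, Finset.mem_erase] at hj2m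
  obtain ⟨hj2ne3, hj2ne1, hj2S⟩ := hj2m
  have h12 : j1 < j2 := lt_of_le_of_ne (S.min'_le _ hj2S) (Ne.symm hj2ne1)
  have h23 : j2 < j3 := lt_of_le_of_ne (S.le_max' _ hj2S) hj2ne3
  set c : Fin 3 → Fin n := fun k => if k.val = 0 then j1 else if k.val = 1 then j2 else j3 with hc
  have hcmem : ∀ k : Fin 3, c k ∈ S := by
    intro k
    fin_cases k <;> simp [hc]
    · exact S.min'_mem hSne
    · exact hj2S
    · exact S.max'_mem hSne
  have hprop : ∀ k : Fin 3, M i (c k) = true ∧ (∃ a, a < i ∧ M a (c k) = true) ∧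
      (∃ b, i < b ∧ M b (c k) = true) := by
    intro k
    have := hSmem _ (hcmem k)
    rwa [hmemMid] at this
  choose hMi habove hbelow using hprop
  choose A hAlt hA using habove
  choose W hWlt hW using hbelow
  refine ⟨c, ?_, ?_⟩
  · apply strictMono_fin3 <;> simp [hc]
    · exact h12
    · exact h23
  · intro σ
    refine ⟨fun k => if k.val = 0 then A (σ⁻¹ 0) else if k.val = 1 then i else W (σ⁻¹ 2),
      ?_, ?_⟩
    · apply strictMono_fin3 <;> simp
      · exact hAlt _
      · exact hWlt _
    · intro b
      have hk : (σ b).val = 0 ∨ (σ b).val = 1 ∨ (σ b).val = 2 := by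
        have := (σ b).isLt
        omega
      rcases hk with hk | hk | hk
      · have hb0 : σ b = 0 := Fin.ext hk
        have hbinv : σ⁻¹ 0 = b := by rw [← hb0]; simp
        simp only [hb0, hk]
        simp [hbinv, hA b]
      · have hb1 : σ b = 1 := Fin.ext hk
        simp only [hb1]
        simpa using hMi b
      · have hb2 : σ b = 2 := Fin.ext hk
        have hbinv : σ⁻¹ 2 = b := by rw [← hb2]; simp
        simp only [hb2]
        simp [hbinv, hW b]

/-- For every `n ≥ 2`, every `n × n` (0,1)-matrix with at least `4n − 3`
`1`-entries is 3-full; equivalently, `p₂(n) ≤ 4n − 4`. -/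
theorem p2_upper_bound :
    ∀ n : ℕ, 2 ≤ n →
      (∀ M : Fin n → Fin n → Bool, 4 * n - 3 ≤ matOnes M → IsFull 3 M) ∧
      pFull 2 n ≤ 4 * n - 4 := by
  intro n hn
  refine ⟨three_full n hn, ?_⟩
  apply csSup_le'
  rintro x ⟨M, hM, rfl⟩
  by_contra hx
  push_neg at hx
  exact hM (three_full n hn M (by omega))
end

section
/- Let M be an m×n (0,1)-matrix and let r, s ≥ 1 be integers. If the sequence MST(M) contains an (s·r, s)-formation as a subsequence, then M contains an (r, s)-formation. -/
/-- Splitting a list along a flatten structure of its image. -/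
lemma exists_chunks_mstAux {α β : Type*} (f : α → β) :
    ∀ (F : List (List β)) (G : List α), G.map f = F.flatten →
      ∃ H : List (List α), H.flatten = G ∧ H.map (List.map f) = F := by
  intro F
  induction F with
  | nil =>
      intro G h
      simp only [List.flatten_nil, List.map_eq_nil_iff] at h
      exact ⟨[], by simp [h], by simp⟩
  | cons B F ih =>
      intro G h
      rw [List.flatten_cons] at h
      rcases List.map_eq_append_iff.mp h with ⟨G1, G2, rfl, h1, h2⟩
      rcases ih G2 h2 with ⟨H, hH1, hH2⟩
      exact ⟨G1 :: H, by simp [hH1], by simp [h1, hH2]⟩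

/-- If `MST(M)` contains an `(s·r, s)`-formation as a subsequence, then
`M` contains an `(r, s)`-formation. -/
theorem mst_formation :
    ∀ (m n r s : ℕ), 1 ≤ r → 1 ≤ s → ∀ M : Fin m → Fin n → Bool,
      IsFormationSeq (s * r) s (MST M) → FatFormation 1 r s M := by
  classical
  intro m n r s hr hs M hform
  obtain ⟨T, F, hT, hFlen, hblocks, hsub⟩ := hform
  -- the row-annotated version of MST M
  set L' : List (Fin m × Fin n) :=
    ((List.finRange m).map (fun i => (rowList (M i)).map (fun j => (i, j)))).flatten
    with hL'def
  have hmap : L'.map Prod.snd = MST M := by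
    simp [hL'def, MST, List.map_flatten, List.map_map, Function.comp_def]
  have hLpw : L'.Pairwise (fun x y : Fin m × Fin n =>
      x.1 < y.1 ∨ (x.1 = y.1 ∧ x.2 < y.2)) := by
    rw [hL'def, List.pairwise_flatten]
    constructor
    · intro l hl
      simp only [List.mem_map] at hl
      obtain ⟨i, -, rfl⟩ := hl
      refine List.Pairwise.map _ (fun a b hab => ?_)
        ((List.pairwise_lt_finRange n).filter _)
      exact Or.inr ⟨rfl, hab⟩
    · refine List.Pairwise.map _ (fun a b hab => ?_) (List.pairwise_lt_finRange m)
      intro x hx y hy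
      simp only [List.mem_map] at hx hy
      obtain ⟨jx, -, rfl⟩ := hx
      obtain ⟨jy, -, rfl⟩ := hy
      exact Or.inl hab
  have hmemL : ∀ q ∈ L', M q.1 q.2 = true := by
    intro q hq
    simp only [hL'def, List.mem_flatten, List.mem_map] at hq
    obtain ⟨l, ⟨i, -, rfl⟩, hql⟩ := hq
    simp only [List.mem_map] at hql
    obtain ⟨j, hj, rfl⟩ := hql
    simpa [rowList, List.mem_filter] using hj
  rw [← hmap] at hsub
  obtain ⟨G, hGsub, hGeq⟩ := List.sublist_map_iff.mp hsub
  obtain ⟨H, hHflat, hHmap⟩ := exists_chunks_mstAux Prod.snd F G hGeq.symm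
  have hHlen : H.length = s := by
    have := congrArg List.length hHmap
    simpa [hFlen] using this
  have hGpw : G.Pairwise (fun x y : Fin m × Fin n =>
      x.1 < y.1 ∨ (x.1 = y.1 ∧ x.2 < y.2)) := hLpw.sublist hGsub
  have hHpw : H.Pairwise (fun a b => ∀ x ∈ a, ∀ y ∈ b,
      x.1 < y.1 ∨ (x.1 = y.1 ∧ x.2 < y.2)) := by
    rw [← hHflat] at hGpw
    exact (List.pairwise_flatten.mp hGpw).2
  have hmemG : ∀ q ∈ G, M q.1 q.2 = true := fun q hq => hmemL q (hGsub.subset hq)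
  -- existence of a representative of each symbol in each chunk
  have hex : ∀ (k : ℕ) (hk : k < H.length), ∀ t ∈ T, ∃ q, q ∈ H[k] ∧ q.2 = t := by
    intro k hk t ht
    have hkF : k < F.length := by rw [hFlen]; rw [hHlen] at hk; exact hk
    have hFk : F[k]'hkF = (H[k]'hk).map Prod.snd := by
      have h1 := List.getElem_of_eq hHmap.symm hkF
      rw [h1, List.getElem_map]
    have hb := hblocks (F[k]'hkF) (List.getElem_mem _)
    have htb : t ∈ F[k]'hkF := List.mem_toFinset.mp (by rw [hb.2]; exact ht)
    rw [hFk] at htb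
    simpa [List.mem_map] using htb
  -- m is positive
  have hTne : T.Nonempty := by
    apply Finset.card_pos.mp
    rw [hT]
    exact Nat.mul_pos hs hr
  obtain ⟨t0, ht0⟩ := hTne
  have h0H : 0 < H.length := by rw [hHlen]; exact hs
  obtain ⟨q0, -, -⟩ := hex 0 h0H t0 ht0
  have hm : 0 < m := q0.1.pos
  -- choose the representatives
  have hex2 : ∀ (k : Fin s) (t : T), ∃ x : Fin m,
      ∃ (hk' : (k : ℕ) < H.length) (q : Fin m × Fin n),
        q ∈ H[(k : ℕ)]'hk' ∧ q.2 = (t : Fin n) ∧ q.1 = x := by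
    intro k t
    have hk' : (k : ℕ) < H.length := by rw [hHlen]; exact k.2
    obtain ⟨q, hq, hq2⟩ := hex (k : ℕ) hk' t t.2
    exact ⟨q.1, hk', q, hq, hq2, rfl⟩
  choose ρ0 hρ0 using hex2
  set ρ : ℕ → Fin n → Fin m := fun k t =>
    if h : k < s ∧ t ∈ T then ρ0 ⟨k, h.1⟩ ⟨t, h.2⟩ else ⟨0, hm⟩ with hρdef
  have hρeq : ∀ (k : ℕ) (hk : k < s) (t : Fin n) (ht : t ∈ T),
      ρ k t = ρ0 ⟨k, hk⟩ ⟨t, ht⟩ := by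
    intro k hk t ht
    simp only [hρdef]
    rw [dif_pos (⟨hk, ht⟩ : k < s ∧ t ∈ T)]
  -- the key order facts
  have key : ∀ (k : ℕ), k + 1 < s → ∀ t ∈ T, ∀ t' ∈ T,
      ρ k t ≤ ρ (k+1) t' ∧ (ρ k t = ρ (k+1) t' → t < t') := by
    intro k hk t ht t' ht'
    have hk0 : k < s := by omega
    obtain ⟨hk1', q, hq, hq2, hq1⟩ := hρ0 ⟨k, hk0⟩ ⟨t, ht⟩
    obtain ⟨hk2', q', hq', hq2', hq1'⟩ := hρ0 ⟨k+1, hk⟩ ⟨t', ht'⟩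
    have hRqq : q.1 < q'.1 ∨ (q.1 = q'.1 ∧ q.2 < q'.2) := by
      have hp := List.pairwise_iff_get.mp hHpw ⟨k, hk1'⟩ ⟨k+1, hk2'⟩
        (by exact Fin.mk_lt_mk.mpr (Nat.lt_succ_self k))
      exact hp q (by simp only [List.get_eq_getElem]; exact hq) q'
        (by simp only [List.get_eq_getElem]; exact hq')
    have e1 : ρ k t = q.1 := by rw [hρeq k hk0 t ht, hq1]
    have e2 : ρ (k+1) t' = q'.1 := by rw [hρeq (k+1) hk t' ht', hq1']
    rw [e1, e2]
    rcases hRqq with h | ⟨hh1, hh2⟩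
    · exact ⟨le_of_lt h, fun heq => absurd heq (ne_of_lt h)⟩
    · refine ⟨le_of_eq hh1, fun _ => ?_⟩
      have hq2a : q.2 = t := hq2
      have hq2b : q'.2 = t' := hq2'
      rw [← hq2a, ← hq2b]
      exact hh2
  have hρD : ∀ (k : ℕ) (hk : k < s) (t : Fin n) (ht : t ∈ T), M (ρ k t) t = true := by
    intro k hk t ht
    obtain ⟨hk', q, hq, hq2, hq1⟩ := hρ0 ⟨k, hk⟩ ⟨t, ht⟩
    have hqG : q ∈ G := by
      rw [← hHflat]
      exact List.mem_flatten.mpr ⟨H[k]'hk', List.getElem_mem _, hq⟩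
    have := hmemG q hqG
    have hq2a : q.2 = t := hq2
    rw [hρeq k hk t ht, ← hq1, ← hq2a]
    exact this
  -- monotonicity in the index
  have hmono : ∀ t ∈ T, ∀ b, b < s → ∀ a, a ≤ b → ρ a t ≤ ρ b t := by
    intro t ht b
    induction b with
    | zero =>
        intro _ a ha
        have : a = 0 := by omega
        subst this; exact le_refl _
    | succ b ih =>
        intro hbs a ha
        rcases Nat.lt_or_ge a (b+1) with h | h
        · have h1 : ρ a t ≤ ρ b t := ih (by omega) a (by omega)
          exact le_trans h1 (key b hbs t ht t ht).1
        · have : a = b + 1 := by omega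
          subst this; exact le_refl _
  -- the level function
  set lam : Fin n → ℕ := fun t =>
    ((Finset.range (s-1)).filter
      (fun i => ∃ t'' ∈ T, t'' ≤ t ∧ ∃ u ∈ T, ρ i u = ρ (i+1) t'')).card with hlamdef
  have hlam : ∀ (a : ℕ), a + 1 < s → ∀ t ∈ T, ∀ t' ∈ T,
      ρ a t = ρ (a+1) t' → lam t < lam t' := by
    intro a ha t ht t' ht' heq
    have htt' : t < t' := (key a ha t ht t' ht').2 heq
    apply Finset.card_lt_card
    constructor
    · intro i hi
      simp only [Finset.mem_filter] at hi ⊢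
      obtain ⟨hi1, t'', ht'', hle, u, hu, hequ⟩ := hi
      exact ⟨hi1, t'', ht'', le_trans hle (le_of_lt htt'), u, hu, hequ⟩
    · intro hcon
      have hmem : a ∈ (Finset.range (s-1)).filter
          (fun i => ∃ t'' ∈ T, t'' ≤ t' ∧ ∃ u ∈ T, ρ i u = ρ (i+1) t'') := by
        refine Finset.mem_filter.mpr ⟨Finset.mem_range.mpr (by omega), ?_⟩
        exact ⟨t', ht', le_refl _, t, ht, heq⟩
      have hmem2 := hcon hmem
      obtain ⟨-, t'', ht'', hle, u, hu, hequ⟩ := Finset.mem_filter.mp hmem2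
      have hX1 : ρ a t ≤ ρ (a+1) t'' := (key a ha t ht t'' ht'').1
      have hX2 : ρ (a+1) t'' ≤ ρ a t := by
        rw [← hequ]
        calc ρ a u ≤ ρ (a+1) t' := (key a ha u hu t' ht').1
        _ = ρ a t := heq.symm
      exact absurd ((key a ha t ht t'' ht'').2 (le_antisymm hX1 hX2))
        (not_lt.mpr hle)
  -- pigeonhole
  have hfib : ∃ v ∈ Finset.range s, r ≤ (T.filter (fun t => lam t = v)).card := by
    by_contra hcon
    push_neg at hcon
    have h1 : ∀ t ∈ T, lam t ∈ Finset.range s := by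
      intro t ht
      rw [Finset.mem_range]
      calc lam t ≤ (Finset.range (s-1)).card := Finset.card_filter_le _ _
      _ = s - 1 := Finset.card_range _
      _ < s := by omega
    have h2 := Finset.card_eq_sum_card_fiberwise h1
    have h3 : ∀ v ∈ Finset.range s, (T.filter (fun t => lam t = v)).card ≤ r - 1 := by
      intro v hv
      have := hcon v hv
      omega
    have h4 := Finset.sum_le_sum h3
    rw [← h2, hT] at h4
    have h5 : (∑ _v ∈ Finset.range s, (r-1)) = s * (r-1) := by
      rw [Finset.sum_const, Finset.card_range, smul_eq_mul]
    rw [h5] at h4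
    obtain ⟨r', rfl⟩ : ∃ r', r = r' + 1 := ⟨r - 1, by omega⟩
    have e1 : s * (r' + 1) = s * r' + s := by ring
    have e2 : s * ((r' + 1) - 1) = s * r' := by norm_num
    omega
  obtain ⟨v, -, hvr⟩ := hfib
  obtain ⟨S, hSsub, hScard⟩ := Finset.exists_subset_card_eq hvr
  have hST : ∀ t ∈ S, t ∈ T := fun t ht => (Finset.mem_filter.mp (hSsub ht)).1
  have hSlam : ∀ t ∈ S, lam t = v := fun t ht => (Finset.mem_filter.mp (hSsub ht)).2
  have hSne : S.Nonempty := Finset.card_pos.mp (by rw [hScard]; omega)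
  -- strict interleaving on S
  have hSint : ∀ (a : ℕ), a + 1 < s → ∀ t ∈ S, ∀ t' ∈ S, ρ a t < ρ (a+1) t' := by
    intro a ha t ht t' ht'
    refine lt_of_le_of_ne ((key a ha t (hST t ht) t' (hST t' ht')).1) ?_
    intro heq
    have := hlam a ha t (hST t ht) t' (hST t' ht') heq
    rw [hSlam t ht, hSlam t' ht'] at this
    exact lt_irrefl _ this
  -- the partition of the rows
  set d : ℕ → Fin m := fun i => S.inf' hSne (fun t => ρ (i+1) t) with hddef
  have hgbound : ∀ x : Fin m,
      ((Finset.range (s-1)).filter (fun i => d i ≤ x)).card < s := by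
    intro x
    calc ((Finset.range (s-1)).filter (fun i => d i ≤ x)).card
        ≤ (Finset.range (s-1)).card := Finset.card_filter_le _ _
    _ = s - 1 := Finset.card_range _
    _ < s := by omega
  refine ⟨fun x => ⟨_, hgbound x⟩, ?_, fun j => S.orderEmbOfFin hScard j, ?_, ?_⟩
  · intro x y hxy
    refine Fin.mk_le_mk.mpr (Finset.card_le_card ?_)
    intro i hi
    simp only [Finset.mem_filter] at hi ⊢
    exact ⟨hi.1, le_trans hi.2 hxy⟩
  · exact (S.orderEmbOfFin hScard).strictMono
  · intro j i
    set t : Fin n := S.orderEmbOfFin hScard j with htdef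
    have htS : t ∈ S := S.orderEmbOfFin_mem hScard j
    have hiS : (i : ℕ) < s := i.2
    have hkey : ((Finset.range (s-1)).filter (fun k => d k ≤ ρ (i : ℕ) t)).card = i := by
      have hfe : (Finset.range (s-1)).filter (fun k => d k ≤ ρ (i : ℕ) t)
          = Finset.range (i : ℕ) := by
        ext k
        simp only [Finset.mem_filter, Finset.mem_range]
        constructor
        · rintro ⟨hk1, hk2⟩
          by_contra hik
          push_neg at hik
          have hlt : ρ (i : ℕ) t < d k := by
            simp only [hddef]
            refine (Finset.lt_inf'_iff hSne).mpr ?_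
            intro t' ht'
            have h1 : ρ (i : ℕ) t < ρ ((i : ℕ)+1) t' := hSint (i : ℕ) (by omega) t htS t' ht'
            have h2 : ρ ((i : ℕ)+1) t' ≤ ρ (k+1) t' :=
              hmono t' (hST t' ht') (k+1) (by omega) ((i : ℕ)+1) (by omega)
            exact lt_of_lt_of_le h1 h2
          exact absurd hk2 (not_le.mpr hlt)
        · intro hk
          refine ⟨by omega, ?_⟩
          have h1 : d k ≤ ρ (k+1) t := Finset.inf'_le _ htS
          have h2 : ρ (k+1) t ≤ ρ (i : ℕ) t :=
            hmono t (hST t htS) (i : ℕ) hiS (k+1) (by omega)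
          exact le_trans h1 h2
      rw [hfe, Finset.card_range]
    have hwit : (⟨((Finset.range (s-1)).filter
        (fun k => d k ≤ ρ (i : ℕ) t)).card, hgbound _⟩ : Fin s) = i ∧
        M (ρ (i : ℕ) t) t = true := by
      constructor
      · exact Fin.ext hkey
      · exact hρD (i : ℕ) hiS t (hST t htS)
    have hne : Nonempty {x : Fin m // (⟨((Finset.range (s-1)).filter
        (fun k => d k ≤ x)).card, hgbound x⟩ : Fin s) = i ∧
        M x (S.orderEmbOfFin hScard j) = true} := ⟨⟨ρ (i : ℕ) t, hwit.1, hwit.2⟩⟩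
    exact Nat.one_le_iff_ne_zero.mpr (Nat.card_ne_zero.mpr ⟨hne, inferInstance⟩)
end
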